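/- Let n ≥ 2, 1 ≤ i ≤ n/2, k ≥ 0, and let P be a k-Rvalid vector of size n with exactly i nonempty entries. Then the number of elements of succ(P) having exactly 2i nonempty entries equals i!·C(n−i, i); in particular, when n = 2i this number equals i!. -/

import Mathlib

open Finset

/-- `Π·h`: the vector whose `q`-th entry is the union of the `Π p` over all `p` with `h p = q`. -/
def dotAct {n : ℕ} (Pi : Fin n → Finset ℕ) (h : Fin n → Fin n) : Fin n → Finset ℕ :=
  fun q => (Finset.univ.filter (fun p => h p = q)).biUnion Pi

/-- Entrywise union of two vectors of sets. -/
def vUnion {n : ℕ} (Pi Pi' : Fin n → Finset ℕ) : Fin n → Finset ℕ :=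
  fun q => Pi q ∪ Pi' q

/-- `r = max (π₀ ∪ … ∪ π_{n−1})`. -/
def vMax {n : ℕ} (Pi : Fin n → Finset ℕ) : ℕ :=
  (Finset.univ.sup Pi).sup id

/-- `Π↑`: add `r = max (π₀ ∪ … ∪ π_{n−1})` to every element of every entry. -/
def vUp {n : ℕ} (Pi : Fin n → Finset ℕ) : Fin n → Finset ℕ :=
  fun q => (Pi q).image (· + vMax Pi)

/-- A `k`-EXPcomposition of size `n`: pairwise disjoint entries whose union is `{1,…,2^k}`. -/
def IsEXP {n : ℕ} (k : ℕ) (Pi : Fin n → Finset ℕ) : Prop :=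
  (∀ p q : Fin n, p ≠ q → Disjoint (Pi p) (Pi q)) ∧
    Finset.univ.sup Pi = Finset.Icc 1 (2 ^ k)

/-- A `k`-Rvalid vector of size `n`. -/
def IsRvalid {n : ℕ} (k : ℕ) (ρ : Fin n → Finset ℕ) : Prop :=
  IsEXP k ρ ∧ (∀ p : Fin n, p.val = 0 → 1 ∈ ρ p) ∧
    ∀ k' < k, ∀ i ∈ Finset.Icc 1 (2 ^ k'), ∀ j ∈ Finset.Icc 1 (2 ^ k'),
      (∃ α, i ∈ ρ α ∧ j ∈ ρ α) → ∃ β, i + 2 ^ k' ∈ ρ β ∧ j + 2 ^ k' ∈ ρ β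

/-- A `k`-Lvalid vector of size `m`. -/
def IsLvalid {m : ℕ} (k : ℕ) (lam : Fin m → Finset ℕ) : Prop :=
  IsEXP k lam ∧ (∀ p : Fin m, p.val = 0 → 2 ^ k ∈ lam p) ∧
    ∀ k' < k, ∀ i ∈ Finset.Icc 1 (2 ^ k'), ∀ j ∈ Finset.Icc 1 (2 ^ k'),
      (∃ α, 2 ^ k + 1 - i ∈ lam α ∧ 2 ^ k + 1 - j ∈ lam α) →
        ∃ β, 2 ^ k + 1 - (i + 2 ^ k') ∈ lam β ∧ 2 ^ k + 1 - (j + 2 ^ k') ∈ lam β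

/-- Number of nonempty entries of a vector of sets. -/
def nne {n : ℕ} (Pi : Fin n → Finset ℕ) : ℕ :=
  (Finset.univ.filter (fun q => Pi q ≠ ∅)).card

/-- `succ(P) = {P ∪ (P·g)↑ : g}`. -/
def succSet {n : ℕ} (P : Fin n → Finset ℕ) : Finset (Fin n → Finset ℕ) :=
  (Finset.univ : Finset (Fin n → Fin n)).image (fun g => vUnion P (vUp (dotAct P g)))

/-- The graded set `U_{m,n}^{(k)}` of U-pairs. -/
def Uset (m n : ℕ) : ℕ → Set ((Fin m → Finset ℕ) × (Fin n → Finset ℕ))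
  | 0 => {x | x = (fun p => if p.val = 0 then {1} else ∅,
                   fun q => if q.val = 0 then {1} else ∅)}
  | k + 1 => {x | ∃ L P, (L, P) ∈ Uset m n k ∧ ∃ (f : Fin m → Fin m) (g : Fin n → Fin n),
      x = (vUnion (dotAct L f) (vUp L), vUnion P (vUp (dotAct P g)))}

/-- The `r`-Stirling number: partitions of `{1,…,a}` into `b` nonempty blocks
with `1,…,r` in pairwise distinct blocks. -/
noncomputable def rStirling (a b r : ℕ) : ℕ :=
  Set.ncard {C : Finset (Finset ℕ) |
    C.card = b ∧ (∅ ∉ C) ∧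
    (∀ B ∈ C, ∀ B' ∈ C, B ≠ B' → Disjoint B B') ∧
    C.sup id = Finset.Icc 1 a ∧
    ∀ x ∈ Finset.Icc 1 r, ∀ y ∈ Finset.Icc 1 r, x ≠ y →
      ∀ B ∈ C, x ∈ B → y ∉ B}

/-- The Stirling number of the second kind: the number of partitions of an
`a`-element set into `b` nonempty blocks. -/
noncomputable def stirling2 (a b : ℕ) : ℕ := rStirling a b 0

/-- The entry `s_n^{(i,j)}` (with `1 ≤ i,j ≤ n`). -/
noncomputable def sEntry (n i j : ℕ) : ℕ :=
  if i ≤ j then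
    (j - i).factorial * Nat.choose (n - i) (j - i) *
      ∑ α ∈ Finset.Icc (j - i) i, Nat.choose i α * i ^ (i - α) * stirling2 α (j - i)
  else 0

/-- The matrix `S_n`, with rows and columns indexed by `{1,…,n}`. -/
noncomputable def Smat (n : ℕ) : Matrix (Fin n) (Fin n) ℕ :=
  fun i j => sEntry n (i.val + 1) (j.val + 1)

/-- One step of the shuffle-automaton action on subsets of the grid. -/
def stepE {m n : ℕ} (E : Finset (Fin m × Fin n)) (f : Fin m → Fin m) (g : Fin n → Fin n) :
    Finset (Fin m × Fin n) :=
  E.image (fun p => (f p.1, p.2)) ∪ E.image (fun p => (p.1, g p.2))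

/-- Reachability from `{(0,0)}` by finitely many steps. -/
def Reach {m n : ℕ} (hm : 0 < m) (hn : 0 < n) (E : Finset (Fin m × Fin n)) : Prop :=
  Relation.ReflTransGen (fun E1 E2 => ∃ f g, E2 = stepE E1 f g)
    {(⟨0, hm⟩, ⟨0, hn⟩)} E

/-- Reachability from `{(0,0)}` in at most `t` steps. -/
def ReachIn {m n : ℕ} (hm : 0 < m) (hn : 0 < n) :
    ℕ → Finset (Fin m × Fin n) → Prop
  | 0, E => E = {(⟨0, hm⟩, ⟨0, hn⟩)}
  | t + 1, E => ReachIn hm hn t E ∨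
      ∃ E' f g, ReachIn hm hn t E' ∧ E = stepE E' f g

/-- `s(Λ,P) = {(i,j) : λ_i ∩ ρ_j ≠ ∅}`. -/
def sTab {m n : ℕ} (L : Fin m → Finset ℕ) (P : Fin n → Finset ℕ) :
    Finset (Fin m × Fin n) :=
  Finset.univ.filter (fun p => (L p.1 ∩ P p.2).Nonempty)


/-!
A successor `Q = P ∪ (P·g)↑` of a `k`-EXPcomposition `P` keeps the entries of `P` in
`{1,…,2^k}` and puts the shifted copy `P·g` in `{2^k+1,…,2^(k+1)}`, so `Q` determines
`P·g`, and, the entries of `P` being disjoint, the restriction of `g` to the support `S`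
of `P`. The support of `Q` is `S ∪ g(S)`, which has `2|S|` elements exactly when `g`
embeds `S` into its complement. Hence the successors counted are in bijection with the
embeddings `S ↪ Sᶜ`, of which there are `(n-i)(n-i-1)⋯(n-2i+1) = i!·C(n-i,i)`.
-/

section Embedding

variable {α : Type*} [DecidableEq α]

lemma card_union_image_eq_two_mul_iff (S : Finset α) (g : α → α) :
    (S ∪ S.image g).card = 2 * S.card ↔ Set.InjOn g S ∧ ∀ p ∈ S, g p ∉ S := by
  constructor
  · intro h
    have hunion := card_union_add_card_inter S (S.image g)
    have himage : (S.image g).card ≤ S.card := card_image_le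
    have hle := card_union_le S (S.image g)
    refine ⟨card_image_iff.mp (by omega), fun p hp hgp => ?_⟩
    have hinter : S ∩ S.image g = ∅ := card_eq_zero.mp (by omega)
    simpa [hinter] using mem_inter.mpr ⟨hgp, mem_image_of_mem g hp⟩
  · rintro ⟨hinj, hout⟩
    have hdisj : Disjoint S (S.image g) := by
      rw [disjoint_right]
      rintro _ hq
      obtain ⟨p, hp, rfl⟩ := mem_image.mp hq
      exact hout p hp
    rw [card_union_of_disjoint hdisj, card_image_of_injOn hinj, two_mul]

def extendById {S T : Finset α} (e : S ↪ T) (p : α) : α :=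
  if hp : p ∈ S then e ⟨p, hp⟩ else p

lemma extendById_of_mem {S T : Finset α} (e : S ↪ T) {p : α} (hp : p ∈ S) :
    extendById e p = e ⟨p, hp⟩ :=
  dif_pos hp

theorem card_filter_image_eq_card_embedding [Fintype α] {β : Type*} [DecidableEq β]
    (S : Finset α) (F : (α → α) → β) (hF : ∀ g g', F g = F g' ↔ ∀ p ∈ S, g p = g' p)
    (N : β → ℕ) (hN : ∀ g, N (F g) = (S ∪ S.image g).card) :
    ((univ.image F).filter (fun b => N b = 2 * S.card)).card =
      Fintype.card (S ↪ (Sᶜ : Finset α)) := by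
  rw [← card_univ]
  symm
  refine card_bij (fun e _ => F (extendById e)) ?_ ?_ ?_
  · intro e _
    refine mem_filter.mpr ⟨mem_image_of_mem _ (mem_univ _), ?_⟩
    rw [hN, card_union_image_eq_two_mul_iff]
    refine ⟨fun p hp p' hp' h => ?_, fun p hp => ?_⟩
    · rw [extendById_of_mem e hp, extendById_of_mem e hp'] at h
      simpa using e.injective (Subtype.ext h)
    · rw [extendById_of_mem e hp]
      exact mem_compl.mp (e _).2
  · intro e₁ _ e₂ _ h
    ext ⟨p, hp⟩
    simpa [extendById_of_mem _ hp] using (hF _ _).mp h p hp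
  · intro b hb
    obtain ⟨hb, hcard⟩ := mem_filter.mp hb
    obtain ⟨g, -, rfl⟩ := mem_image.mp hb
    rw [hN, card_union_image_eq_two_mul_iff] at hcard
    obtain ⟨hinj, hout⟩ := hcard
    let e : S ↪ (Sᶜ : Finset α) :=
      ⟨fun p => ⟨g p, mem_compl.mpr (hout p p.2)⟩,
        fun p q h => Subtype.ext (hinj p.2 q.2 (congrArg Subtype.val h))⟩
    exact ⟨e, mem_univ _, (hF _ _).mpr fun p hp => extendById_of_mem e hp⟩

end Embedding

section Successor

variable {n : ℕ}

lemma mem_dotAct {P : Fin n → Finset ℕ} {g : Fin n → Fin n} {q : Fin n} {x : ℕ} :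
    x ∈ dotAct P g q ↔ ∃ p, g p = q ∧ x ∈ P p := by
  simp [dotAct]

lemma dotAct_eq_dotAct_iff {P : Fin n → Finset ℕ}
    (hdisj : ∀ p q : Fin n, p ≠ q → Disjoint (P p) (P q)) {g g' : Fin n → Fin n} :
    dotAct P g = dotAct P g' ↔ ∀ p, P p ≠ ∅ → g p = g' p := by
  constructor
  · intro h p hp
    obtain ⟨x, hx⟩ := nonempty_iff_ne_empty.mpr hp
    have hx' : x ∈ dotAct P g' (g p) := h ▸ mem_dotAct.mpr ⟨p, rfl, hx⟩
    obtain ⟨p', hp', hxp'⟩ := mem_dotAct.mp hx'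
    obtain rfl : p' = p := by
      by_contra hne
      exact disjoint_left.mp (hdisj p' p hne) hxp' hx
    exact hp'.symm
  · intro h
    funext q
    ext x
    simp only [mem_dotAct]
    constructor <;> rintro ⟨p, rfl, hx⟩
    · exact ⟨p, (h p (ne_empty_of_mem hx)).symm, hx⟩
    · exact ⟨p, h p (ne_empty_of_mem hx), hx⟩

lemma sup_dotAct (P : Fin n → Finset ℕ) (g : Fin n → Fin n) :
    univ.sup (dotAct P g) = univ.sup P := by
  ext x
  simp only [mem_sup, mem_dotAct, mem_univ, true_and]
  constructor
  · rintro ⟨q, p, -, hx⟩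
    exact ⟨p, hx⟩
  · rintro ⟨p, hx⟩
    exact ⟨g p, p, rfl, hx⟩

lemma vMax_dotAct {k : ℕ} {P : Fin n → Finset ℕ} (hP : IsEXP k P) (g : Fin n → Fin n) :
    vMax (dotAct P g) = 2 ^ k := by
  apply le_antisymm
  · refine Finset.sup_le fun x hx => ?_
    rw [sup_dotAct, hP.2] at hx
    exact (mem_Icc.mp hx).2
  · refine Finset.le_sup (f := id) ?_
    rw [sup_dotAct, hP.2]
    exact mem_Icc.mpr ⟨Nat.one_le_two_pow, le_rfl⟩

lemma mem_Icc_of_mem_isEXP {k : ℕ} {P : Fin n → Finset ℕ} (hP : IsEXP k P) {q : Fin n}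
    {x : ℕ} (hx : x ∈ P q) : x ∈ Icc 1 (2 ^ k) :=
  hP.2 ▸ mem_sup.mpr ⟨q, mem_univ q, hx⟩

lemma add_two_pow_mem_succ_iff {k : ℕ} {P : Fin n → Finset ℕ} (hP : IsEXP k P)
    (g : Fin n → Fin n) (q : Fin n) {x : ℕ} (hx : 0 < x) :
    x + 2 ^ k ∈ vUnion P (vUp (dotAct P g)) q ↔ x ∈ dotAct P g q := by
  simp only [vUnion, vUp, vMax_dotAct hP, mem_union, mem_image, add_left_inj, exists_eq_right]
  refine ⟨fun h => h.resolve_left fun hP' => ?_, Or.inr⟩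
  have := (mem_Icc.mp (mem_Icc_of_mem_isEXP hP hP')).2
  omega

lemma succ_eq_succ_iff {k : ℕ} {P : Fin n → Finset ℕ} (hP : IsEXP k P)
    {g g' : Fin n → Fin n} :
    vUnion P (vUp (dotAct P g)) = vUnion P (vUp (dotAct P g')) ↔
      ∀ p, P p ≠ ∅ → g p = g' p := by
  rw [← dotAct_eq_dotAct_iff hP.1]
  refine ⟨fun h => ?_, fun h => by rw [h]⟩
  have hsub : ∀ {a b : Fin n → Fin n},
      vUnion P (vUp (dotAct P a)) = vUnion P (vUp (dotAct P b)) →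
        ∀ q, dotAct P a q ⊆ dotAct P b q := by
    intro a b hab q x hx
    obtain ⟨p, -, hxp⟩ := mem_dotAct.mp hx
    have hpos : 0 < x := (mem_Icc.mp (mem_Icc_of_mem_isEXP hP hxp)).1
    rw [← add_two_pow_mem_succ_iff hP _ _ hpos, ← hab, add_two_pow_mem_succ_iff hP _ _ hpos]
    exact hx
  funext q
  exact (hsub h q).antisymm (hsub h.symm q)

lemma filter_succ_ne_empty (P : Fin n → Finset ℕ) (g : Fin n → Fin n) :
    univ.filter (fun q => vUnion P (vUp (dotAct P g)) q ≠ ∅) =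
      univ.filter (fun q => P q ≠ ∅) ∪ (univ.filter (fun q => P q ≠ ∅)).image g := by
  ext q
  simp only [mem_filter, mem_univ, true_and, mem_union, mem_image, vUnion, vUp,
    ← nonempty_iff_ne_empty, union_nonempty, image_nonempty]
  constructor
  · rintro (h | ⟨y, hy⟩)
    · exact Or.inl h
    · obtain ⟨p, hpq, hyp⟩ := mem_dotAct.mp hy
      exact Or.inr ⟨p, ⟨y, hyp⟩, hpq⟩
  · rintro (h | ⟨p, ⟨x, hx⟩, hpq⟩)
    · exact Or.inl h
    · exact Or.inr ⟨x, mem_dotAct.mpr ⟨p, hpq, hx⟩⟩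

end Successor

theorem stmt10_general (n k i : ℕ)
    (P : Fin n → Finset ℕ) (hP : IsRvalid k P) (hc : nne P = i) :
    ((succSet P).filter (fun Q => nne Q = 2 * i)).card =
        i.factorial * Nat.choose (n - i) i ∧
      (n = 2 * i →
        ((succSet P).filter (fun Q => nne Q = 2 * i)).card = i.factorial) := by
  set S : Finset (Fin n) := univ.filter (fun q => P q ≠ ∅)
  have hS : S.card = i := hc
  have hcount : ((succSet P).filter (fun Q => nne Q = 2 * i)).card =
      i.factorial * Nat.choose (n - i) i := by
    rw [← hS, succSet, card_filter_image_eq_card_embedding S _ (fun g g' => ?_) nne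
      (fun g => congrArg card (filter_succ_ne_empty P g)), Fintype.card_embedding_eq,
      Fintype.card_coe, Fintype.card_coe, card_compl, Fintype.card_fin,
      Nat.descFactorial_eq_factorial_mul_choose]
    simpa [S] using succ_eq_succ_iff hP.1
  refine ⟨hcount, fun hn => ?_⟩
  rw [hcount, hn, show 2 * i - i = i by omega, Nat.choose_self, mul_one]

theorem stmt10 (n k i : ℕ) (hn : 2 ≤ n) (hi1 : 1 ≤ i) (hin : 2 * i ≤ n)
    (P : Fin n → Finset ℕ) (hP : IsRvalid k P) (hc : nne P = i) :
    ((succSet P).filter (fun Q => nne Q = 2 * i)).card =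
        i.factorial * Nat.choose (n - i) i ∧
      (n = 2 * i →
        ((succSet P).filter (fun Q => nne Q = 2 * i)).card = i.factorial) :=
  stmt10_general n k i P hP hc
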